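/- Let R₀ > 0, let w, z ∈ ℂ with |z - w| < R₀, and let 0 < ε < R₀ - |z - w|. Then the integral of 1/(ζ̄ - z̄)² over the region B_{R₀}(w) \ B_ε(z) (with respect to planar Lebesgue measure) equals 0. -/

import Mathlib

/-!
Translate `z` to the origin, so the integrand becomes `f v = (conj v)⁻²`. Since `f (c • v) = c⁻² f v`
for real `c`, the measure `f v dv` is invariant under the inversion `v ↦ r² v / ‖v‖²`. With
`r² = R² - ‖w‖²` this inversion exchanges the spheres `∂B_R(w)` and `∂B_R(-w)`, so it maps
`B_R(w) \ B_ε(0)` onto `B_{r²/ε}(0) \ B_R(-w)` up to a null set. Rotation by `-1` leaves `f` unchanged and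
maps `B_R(w) \ B_ε(0)` to `B_R(-w) \ B_ε(0)`. So twice the integral equals the integral over the annulus
`B_{r²/ε}(0) \ B_ε(0)`, and that integral vanishes because rotation by `i` turns `f` into `-f`.
-/

open MeasureTheory Metric Complex ComplexConjugate
open EuclideanGeometry Module

theorem closedBall_ae_eq_ball {E : Type*} [NormedAddCommGroup E] [NormedSpace ℝ E]
    [FiniteDimensional ℝ E] [MeasurableSpace E] [BorelSpace E] [Nontrivial E] (μ : Measure E)
    [μ.IsAddHaarMeasure] (x : E) (r : ℝ) : closedBall x r =ᵐ[μ] ball x r := by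
  refine ae_eq_set.mpr ⟨?_, ?_⟩
  · rw [closedBall_sdiff_ball]
    exact Measure.addHaar_sphere μ x r
  · simp [Set.sdiff_eq_empty.mpr ball_subset_closedBall]

section Inversion

variable {F : Type*} [NormedAddCommGroup F] [InnerProductSpace ℝ F]

theorem inversion_zero_apply (r : ℝ) (x : F) : inversion 0 r x = (r / ‖x‖) ^ 2 • x := by
  simp [inversion]

theorem norm_inversion_zero (r : ℝ) (x : F) : ‖inversion 0 r x‖ = r ^ 2 / ‖x‖ := by
  simpa using dist_inversion_center 0 x r

theorem norm_inversion_zero_sub_sq_sub_sq {r R : ℝ} {w x : F} (hrR : r ^ 2 = R ^ 2 - ‖w‖ ^ 2)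
    (hx : x ≠ 0) :
    ‖inversion 0 r x - w‖ ^ 2 - R ^ 2 = (r / ‖x‖) ^ 2 * (R ^ 2 - ‖x + w‖ ^ 2) := by
  have hx' : ‖x‖ ≠ 0 := norm_ne_zero_iff.mpr hx
  rw [inversion_zero_apply, norm_sub_sq_real, norm_add_sq_real, norm_smul, inner_smul_left,
    Real.norm_of_nonneg (by positivity)]
  simp only [conj_trivial]
  field_simp
  rw [hrR]
  ring

theorem inversion_zero_image_ball_diff_ball {r R ε : ℝ} {w : F} (hwR : ‖w‖ < R)
    (hrR : r ^ 2 = R ^ 2 - ‖w‖ ^ 2) (hε : 0 < ε) :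
    inversion 0 r '' (ball w R \ ball 0 ε) = closedBall 0 (r ^ 2 / ε) \ closedBall (-w) R := by
  have hR : 0 < R := (norm_nonneg w).trans_lt hwR
  have hr : r ≠ 0 := by
    rintro rfl
    nlinarith [norm_nonneg w]
  rw [Set.image_eq_preimage_of_inverse (inversion_involutive 0 hr).leftInverse
    (inversion_involutive 0 hr).rightInverse]
  ext x
  rcases eq_or_ne x 0 with rfl | hx
  · simp [hε, hwR.le]
  have hx' : 0 < ‖x‖ := norm_pos_iff.mpr hx
  have key := norm_inversion_zero_sub_sq_sub_sq hrR hx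
  have hc : 0 < (r / ‖x‖) ^ 2 := by positivity
  have houter : ‖inversion 0 r x - w‖ < R ↔ R < ‖x + w‖ := by
    rw [← sq_lt_sq₀ (norm_nonneg _) hR.le, ← sq_lt_sq₀ hR.le (norm_nonneg _)]
    constructor <;> intro h <;> nlinarith
  have hinner : ε ≤ r ^ 2 / ‖x‖ ↔ ‖x‖ ≤ r ^ 2 / ε := by
    rw [le_div_iff₀ hx', le_div_iff₀ hε, mul_comm]
  simp only [Set.mem_preimage, Set.mem_sdiff, mem_ball, mem_closedBall, dist_eq_norm, sub_zero,
    sub_neg_eq_add, not_lt, not_le, norm_inversion_zero, houter, hinner, and_comm]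

variable [FiniteDimensional ℝ F]

theorem abs_det_smul_reflection (c : ℝ) (K : Submodule ℝ F) :
    |(c • (K.reflection : F →L[ℝ] F)).det| = |c| ^ finrank ℝ F := by
  rw [ContinuousLinearMap.det, ContinuousLinearMap.toLinearMap_smul, LinearMap.det_smul]
  erw [K.det_reflection]
  simp [abs_mul]

theorem setIntegral_image_inversion_zero [MeasurableSpace F] [BorelSpace F] (μ : Measure F)
    [μ.IsAddHaarMeasure] {E : Type*} [NormedAddCommGroup E] [NormedSpace ℝ E] {g : F → E}
    (hg : ∀ c : ℝ, 0 < c → ∀ x, g (c • x) = (c ^ finrank ℝ F)⁻¹ • g x) {r : ℝ} (hr : r ≠ 0)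
    {s : Set F} (hs : MeasurableSet s) (h0 : (0 : F) ∉ s) :
    ∫ x in inversion 0 r '' s, g x ∂μ = ∫ x in s, g x ∂μ := by
  rw [integral_image_eq_integral_abs_det_fderiv_smul μ hs
    (fun x hx ↦ (hasFDerivAt_inversion (ne_of_mem_of_not_mem hx h0)).hasFDerivWithinAt)
    (inversion_injective 0 hr).injOn]
  refine setIntegral_congr_fun hs fun x hx ↦ ?_
  have hc : 0 < (r / ‖x‖) ^ 2 := by
    have : x ≠ 0 := ne_of_mem_of_not_mem hx h0
    positivity
  rw [abs_det_smul_reflection, dist_zero_right, inversion_zero_apply, hg _ hc, abs_of_pos hc,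
    smul_smul, mul_inv_cancel₀ (pow_pos hc _).ne', one_smul]

end Inversion

section ConjBeurlingKernel

theorem inv_conj_sq_real_smul (c : ℝ) (v : ℂ) :
    ((conj (c • v)) ^ 2)⁻¹ = (c ^ 2)⁻¹ • ((conj v) ^ 2)⁻¹ := by
  simp [Complex.real_smul, mul_pow, mul_comm]

theorem setIntegral_inv_conj_sq_eq_mul_preimage_rotation (a : Circle) (s : Set ℂ) :
    ∫ v in s, ((conj v) ^ 2)⁻¹ = (a : ℂ) ^ 2 * ∫ v in rotation a ⁻¹' s, ((conj v) ^ 2)⁻¹ := by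
  rw [← (rotation a).measurePreserving.setIntegral_preimage_emb
    (rotation a).toHomeomorph.measurableEmbedding, ← integral_const_mul]
  refine integral_congr_ae (ae_of_all _ fun v ↦ ?_)
  have : conj (a : ℂ) = (a : ℂ)⁻¹ := by simp [← Circle.coe_inv_eq_conj]
  simp [rotation_apply, mul_pow, this, mul_comm]

theorem setIntegral_inv_conj_sq_ball_zero_diff_ball_zero (A a : ℝ) :
    ∫ v in ball (0 : ℂ) A \ ball 0 a, ((conj v) ^ 2)⁻¹ = 0 := by
  have hI : (Circle.exp (Real.pi / 2) : ℂ) = I := by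
    rw [Circle.coe_exp]
    push_cast
    exact exp_pi_div_two_mul_I
  have h := setIntegral_inv_conj_sq_eq_mul_preimage_rotation (Circle.exp (Real.pi / 2))
    (ball 0 A \ ball 0 a)
  rw [Set.preimage_sdiff, LinearIsometryEquiv.preimage_ball, LinearIsometryEquiv.preimage_ball,
    map_zero, hI, I_sq] at h
  linear_combination (1 / 2 : ℂ) * h

theorem integrableOn_inv_conj_sq_diff_ball {s : Set ℂ} (hs : MeasurableSet s)
    (hs' : volume s ≠ ⊤) {a : ℝ} (ha : 0 < a) :
    IntegrableOn (fun v : ℂ ↦ ((conj v) ^ 2)⁻¹) (s \ ball 0 a) := by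
  refine Measure.integrableOn_of_bounded (M := (a ^ 2)⁻¹)
    (ne_top_of_le_ne_top hs' (measure_mono Set.sdiff_subset)) (by fun_prop) ?_
  filter_upwards [ae_restrict_mem (hs.diff measurableSet_ball)] with v hv
  have hav : a ≤ ‖v‖ := by simpa using hv.2
  simpa [norm_inv, norm_pow] using inv_anti₀ (by positivity) (pow_le_pow_left₀ ha.le hav 2)

theorem setIntegral_inv_conj_sq_ball_diff_ball_zero {w : ℂ} {R ε : ℝ} (hε : 0 < ε)
    (hεR : ε ≤ R - ‖w‖) : ∫ v in ball w R \ ball 0 ε, ((conj v) ^ 2)⁻¹ = 0 := by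
  have hwR : ‖w‖ < R := by linarith
  set r := √(R ^ 2 - ‖w‖ ^ 2)
  have hrR : r ^ 2 = R ^ 2 - ‖w‖ ^ 2 := Real.sq_sqrt (by nlinarith [norm_nonneg w])
  have hr : r ≠ 0 := fun h ↦ by nlinarith [norm_nonneg w]
  have hinversion : ∫ v in ball w R \ ball 0 ε, ((conj v) ^ 2)⁻¹ =
      ∫ v in ball 0 (r ^ 2 / ε) \ ball (-w) R, ((conj v) ^ 2)⁻¹ := by
    have hf : ∀ c : ℝ, 0 < c → ∀ v : ℂ,
        ((conj (c • v)) ^ 2)⁻¹ = (c ^ finrank ℝ ℂ)⁻¹ • ((conj v) ^ 2)⁻¹ := by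
      simp only [Complex.finrank_real_complex]
      exact fun c _ v ↦ inv_conj_sq_real_smul c v
    rw [← setIntegral_image_inversion_zero volume hf hr
      (measurableSet_ball.diff measurableSet_ball) (by simp [hε]),
      inversion_zero_image_ball_diff_ball hwR hrR hε]
    exact setIntegral_congr_set
      ((closedBall_ae_eq_ball volume _ _).diff (closedBall_ae_eq_ball volume _ _))
  have hneg : ∫ v in ball (-w) R \ ball 0 ε, ((conj v) ^ 2)⁻¹ =
      ∫ v in ball w R \ ball 0 ε, ((conj v) ^ 2)⁻¹ := by
    rw [setIntegral_inv_conj_sq_eq_mul_preimage_rotation (-1)]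
    simp [Set.preimage_sdiff, LinearIsometryEquiv.preimage_ball]
  have hsmall : ball (0 : ℂ) ε ⊆ ball (-w) R := ball_subset_ball' (by
    rw [dist_zero_left, norm_neg]
    linarith)
  have hlarge : ball (-w) R ⊆ ball (0 : ℂ) (r ^ 2 / ε) := ball_subset_ball' (by
    rw [dist_zero_right, norm_neg, le_div_iff₀ hε, hrR]
    nlinarith [norm_nonneg w])
  have hannulus := setIntegral_inv_conj_sq_ball_zero_diff_ball_zero (r ^ 2 / ε) ε
  have hint := integrableOn_inv_conj_sq_diff_ball measurableSet_ball measure_ball_lt_top.ne hε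
    (s := ball 0 (r ^ 2 / ε))
  rw [← Set.sdiff_union_sdiff_cancel hlarge hsmall] at hannulus hint
  rw [setIntegral_union (Set.disjoint_sdiff_left.mono_right Set.sdiff_subset)
    (measurableSet_ball.diff measurableSet_ball) hint.left_of_union hint.right_of_union,
    hneg, hinversion] at hannulus
  rw [hinversion]
  linear_combination (1 / 2 : ℂ) * hannulus

end ConjBeurlingKernel

theorem cancellation_lemma_general (R₀ : ℝ) (w z : ℂ) (ε : ℝ) (hε : 0 < ε) (hεR : ε < R₀ - ‖z - w‖) :
    ∫ ζ in (ball w R₀ \ ball z ε), ((conj ζ - conj z)^2)⁻¹ = 0 := by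
  rw [← (measurePreserving_add_right volume z).setIntegral_preimage_emb
    (measurableEmbedding_addRight z)]
  simp only [map_add, add_sub_cancel_right, Set.preimage_sdiff, preimage_add_right_ball, sub_self]
  exact setIntegral_inv_conj_sq_ball_diff_ball_zero hε (by rw [norm_sub_rev]; linarith)

theorem cancellation_lemma (R₀ : ℝ) (hR₀ : 0 < R₀) (w z : ℂ)
    (hzw : ‖z - w‖ < R₀) (ε : ℝ) (hε : 0 < ε) (hεR : ε < R₀ - ‖z - w‖) :
    ∫ ζ in (ball w R₀ \ ball z ε), ((conj ζ - conj z)^2)⁻¹ = 0 :=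
  cancellation_lemma_general R₀ w z ε hε hεR
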